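/- arXiv:2401.02019 — 2 statements merged into one kernel-verified Lean document; each statement's English description precedes it below -/
import Mathlib

section
/- Let x_1,…,x_m be points in a set X, let (ℓ_θ)_{θ∈Θ} be a family of loss functions with 0 ≤ ℓ_θ(x) ≤ Δ for all x ∈ X and θ ∈ Θ, and let w̃ : X → ℝ satisfy 0 ≤ w̃(x) ≤ B for all x ∈ X. Assume all suprema over Θ below are measurable in the Rademacher variables. Then the empirical weighted Rademacher complexity satisfies R̂^w̃(Θ) ≤ Δ√(V̂(w̃)) + R̂(Θ). -/
open Finset

/-- The empirical Rademacher complexity of the family `(ℓ θ)_{θ ∈ Θ}` over the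
points `x 0, …, x (m-1)`: the expectation, over i.i.d. uniform signs
`σ ∈ {−1,+1}^m`, of `sup_θ (1/m) ∑ i, σ i * ℓ θ (x i)`. -/
noncomputable def empRad {X Θ : Type*} (m : ℕ) (x : Fin m → X) (ℓ : Θ → X → ℝ) : ℝ :=
  (1 / 2 ^ m : ℝ) *
    ∑ σ : Fin m → Bool, ⨆ θ : Θ, (1 / m : ℝ) * ∑ i, (if σ i then (1 : ℝ) else -1) * ℓ θ (x i)

/-- The empirical weighted Rademacher complexity, with weights `w̃ (x i)`. -/
noncomputable def empRadW {X Θ : Type*} (m : ℕ) (x : Fin m → X) (w : X → ℝ)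
    (ℓ : Θ → X → ℝ) : ℝ :=
  (1 / 2 ^ m : ℝ) *
    ∑ σ : Fin m → Bool,
      ⨆ θ : Θ, (1 / m : ℝ) * ∑ i, (if σ i then (1 : ℝ) else -1) * w (x i) * ℓ θ (x i)

/-- The empirical variance of the weight function `w̃` over the points. -/
noncomputable def empVar {X : Type*} (m : ℕ) (x : Fin m → X) (w : X → ℝ) : ℝ :=
  (1 / m : ℝ) * ∑ i, (w (x i) - 1) ^ 2

/-- the empirical weighted Rademacher complexity satisfies
`R̂^w̃(Θ) ≤ Δ √(V̂(w̃)) + R̂(Θ)`. -/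
theorem weighted_rademacher_le
    {X Θ : Type*} [Nonempty Θ] (m : ℕ) (hm : 0 < m) (x : Fin m → X)
    (ℓ : Θ → X → ℝ) (Δ : ℝ) (hℓ : ∀ θ x', 0 ≤ ℓ θ x' ∧ ℓ θ x' ≤ Δ)
    (w : X → ℝ) (B : ℝ) (hw : ∀ x', 0 ≤ w x' ∧ w x' ≤ B) :
    empRadW m x w ℓ ≤ Δ * Real.sqrt (empVar m x w) + empRad m x ℓ := by
  have hm' : (0 : ℝ) < m := by exact_mod_cast hm
  set c := Δ * Real.sqrt (empVar m x w) with hc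
  obtain ⟨θ₀⟩ := ‹Nonempty Θ›
  have hΔ : 0 ≤ Δ := le_trans (hℓ θ₀ (x ⟨0, hm⟩)).1 (hℓ θ₀ (x ⟨0, hm⟩)).2
  -- Cauchy–Schwarz step
  have hCS : (1 / m : ℝ) * ∑ i, |w (x i) - 1| ≤ Real.sqrt (empVar m x w) := by
    have h1 : ((1 / m : ℝ) * ∑ i, |w (x i) - 1|) ^ 2 ≤ empVar m x w := by
      have h2 : (∑ i, |w (x i) - 1|) ^ 2 ≤ (m : ℝ) * ∑ i, (w (x i) - 1) ^ 2 := by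
        have := sq_sum_le_card_mul_sum_sq (s := Finset.univ)
          (f := fun i : Fin m => |w (x i) - 1|)
        simpa [sq_abs] using this
      have : ((1 / m : ℝ) * ∑ i, |w (x i) - 1|) ^ 2
          = (1/m)^2 * (∑ i, |w (x i) - 1|) ^ 2 := by ring
      rw [this, empVar]
      calc (1/(m:ℝ))^2 * (∑ i, |w (x i) - 1|) ^ 2
          ≤ (1/(m:ℝ))^2 * ((m : ℝ) * ∑ i, (w (x i) - 1) ^ 2) := by
            apply mul_le_mul_of_nonneg_left h2 (by positivity)
        _ = (1 / m : ℝ) * ∑ i, (w (x i) - 1) ^ 2 := by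
            field_simp
    have hnn : 0 ≤ (1 / m : ℝ) * ∑ i, |w (x i) - 1| := by positivity
    calc (1 / m : ℝ) * ∑ i, |w (x i) - 1|
        = Real.sqrt (((1 / m : ℝ) * ∑ i, |w (x i) - 1|) ^ 2) := by
          rw [Real.sqrt_sq hnn]
      _ ≤ Real.sqrt (empVar m x w) := Real.sqrt_le_sqrt h1
  have hc0 : 0 ≤ c := by
    apply mul_nonneg hΔ (Real.sqrt_nonneg _)
  -- per-σ bound
  have key : ∀ σ : Fin m → Bool,
      (⨆ θ : Θ, (1 / m : ℝ) * ∑ i, (if σ i then (1 : ℝ) else -1) * w (x i) * ℓ θ (x i))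
      ≤ c + ⨆ θ : Θ, (1 / m : ℝ) * ∑ i, (if σ i then (1 : ℝ) else -1) * ℓ θ (x i) := by
    intro σ
    have hbdd : BddAbove (Set.range fun θ : Θ =>
        (1 / m : ℝ) * ∑ i, (if σ i then (1 : ℝ) else -1) * ℓ θ (x i)) := by
      refine ⟨Δ, ?_⟩
      rintro _ ⟨θ, rfl⟩
      have : ∑ i, (if σ i then (1 : ℝ) else -1) * ℓ θ (x i) ≤ ∑ _i : Fin m, Δ := by
        apply Finset.sum_le_sum
        intro i _
        rcases hℓ θ (x i) with ⟨h0, h1⟩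
        by_cases h : σ i <;> simp [h] <;> linarith
      simp only [Finset.sum_const, Finset.card_univ, Fintype.card_fin, nsmul_eq_mul] at this
      calc (1 / m : ℝ) * ∑ i, (if σ i then (1 : ℝ) else -1) * ℓ θ (x i)
          ≤ (1 / m : ℝ) * ((m : ℝ) * Δ) := by
            apply mul_le_mul_of_nonneg_left this (by positivity)
        _ = Δ := by field_simp
    apply ciSup_le
    intro θ
    have hpt : (1 / m : ℝ) * ∑ i, (if σ i then (1 : ℝ) else -1) * w (x i) * ℓ θ (x i)
        ≤ c + (1 / m : ℝ) * ∑ i, (if σ i then (1 : ℝ) else -1) * ℓ θ (x i) := by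
      have hdiff : (1 / m : ℝ) * ∑ i, (if σ i then (1 : ℝ) else -1) * w (x i) * ℓ θ (x i)
          - (1 / m : ℝ) * ∑ i, (if σ i then (1 : ℝ) else -1) * ℓ θ (x i)
          = (1 / m : ℝ) * ∑ i, (if σ i then (1 : ℝ) else -1) * (w (x i) - 1) * ℓ θ (x i) := by
        rw [← mul_sub, ← Finset.sum_sub_distrib]
        congr 1
        apply Finset.sum_congr rfl
        intro i _
        ring
      have hterm : ∀ i : Fin m, (if σ i then (1 : ℝ) else -1) * (w (x i) - 1) * ℓ θ (x i)
          ≤ |w (x i) - 1| * Δ := by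
        intro i
        rcases hℓ θ (x i) with ⟨h0, h1⟩
        have habs : |w (x i) - 1| * ℓ θ (x i) ≤ |w (x i) - 1| * Δ :=
          mul_le_mul_of_nonneg_left h1 (abs_nonneg _)
        by_cases h : σ i
        · simp only [h, if_true, one_mul]
          calc (w (x i) - 1) * ℓ θ (x i) ≤ |w (x i) - 1| * ℓ θ (x i) :=
                mul_le_mul_of_nonneg_right (le_abs_self _) h0
            _ ≤ _ := habs
        · simp only [h, if_false]
          calc -1 * (w (x i) - 1) * ℓ θ (x i) = (-(w (x i) - 1)) * ℓ θ (x i) := by ring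
            _ ≤ |w (x i) - 1| * ℓ θ (x i) :=
                mul_le_mul_of_nonneg_right (neg_le_abs _) h0
            _ ≤ _ := habs
      have hsum : (1 / m : ℝ) * ∑ i, (if σ i then (1 : ℝ) else -1) * (w (x i) - 1) * ℓ θ (x i)
          ≤ (1 / m : ℝ) * ∑ i, |w (x i) - 1| * Δ := by
        apply mul_le_mul_of_nonneg_left (Finset.sum_le_sum fun i _ => hterm i) (by positivity)
      have heq : (1 / m : ℝ) * ∑ i, |w (x i) - 1| * Δ
          = Δ * ((1 / m : ℝ) * ∑ i, |w (x i) - 1|) := by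
        rw [← Finset.sum_mul]; ring
      have : (1 / m : ℝ) * ∑ i, |w (x i) - 1| * Δ ≤ c := by
        rw [heq, hc]
        exact mul_le_mul_of_nonneg_left hCS hΔ
      linarith [hdiff ▸ hsum.trans this]
    calc (1 / m : ℝ) * ∑ i, (if σ i then (1 : ℝ) else -1) * w (x i) * ℓ θ (x i)
        ≤ c + (1 / m : ℝ) * ∑ i, (if σ i then (1 : ℝ) else -1) * ℓ θ (x i) := hpt
      _ ≤ c + ⨆ θ : Θ, (1 / m : ℝ) * ∑ i, (if σ i then (1 : ℝ) else -1) * ℓ θ (x i) := by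
          gcongr
          exact le_ciSup hbdd θ
  -- sum over σ
  rw [empRadW, empRad]
  have hsum : ∑ σ : Fin m → Bool,
      (⨆ θ : Θ, (1 / m : ℝ) * ∑ i, (if σ i then (1 : ℝ) else -1) * w (x i) * ℓ θ (x i))
      ≤ ∑ σ : Fin m → Bool,
      (c + ⨆ θ : Θ, (1 / m : ℝ) * ∑ i, (if σ i then (1 : ℝ) else -1) * ℓ θ (x i)) :=
    Finset.sum_le_sum fun σ _ => key σ
  calc (1 / 2 ^ m : ℝ) * ∑ σ : Fin m → Bool,
        ⨆ θ : Θ, (1 / m : ℝ) * ∑ i, (if σ i then (1 : ℝ) else -1) * w (x i) * ℓ θ (x i)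
      ≤ (1 / 2 ^ m : ℝ) * ∑ σ : Fin m → Bool,
        (c + ⨆ θ : Θ, (1 / m : ℝ) * ∑ i, (if σ i then (1 : ℝ) else -1) * ℓ θ (x i)) := by
        apply mul_le_mul_of_nonneg_left hsum (by positivity)
    _ = c + (1 / 2 ^ m : ℝ) * ∑ σ : Fin m → Bool,
        ⨆ θ : Θ, (1 / m : ℝ) * ∑ i, (if σ i then (1 : ℝ) else -1) * ℓ θ (x i) := by
        rw [Finset.sum_add_distrib, Finset.sum_const]
        simp only [Finset.card_univ, Fintype.card_fun, Fintype.card_bool, Fintype.card_fin,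
          nsmul_eq_mul, mul_add, Nat.cast_pow, Nat.cast_ofNat]
        have h2 : (0:ℝ) < 2 ^ m := by positivity
        field_simp
end

section
/- Let a_1,…,a_m and b_1,…,b_m be real numbers with 0 ≤ b_i ≤ B and |a_i − b_i| ≤ ε for all i. Then the fourth roots of the empirical variances satisfy ( (1/m) Σ_{i=1}^m (a_i − 1)² )^{1/4} − ( (1/m) Σ_{i=1}^m (b_i − 1)² )^{1/4} ≤ √ε + ( 2(B+1)ε )^{1/4}. (Here a_i = ṽ(f(x_i)) and b_i = w̃(f(x_i)) in the paper's covering argument, so this bounds the perturbation of the fourth root of the empirical variance of the weight function.) -/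
open Finset

lemma sqrt_add_le' (x y : ℝ) (hx : 0 ≤ x) (hy : 0 ≤ y) :
    Real.sqrt (x + y) ≤ Real.sqrt x + Real.sqrt y := by
  rw [← Real.sqrt_sq (by positivity : (0:ℝ) ≤ Real.sqrt x + Real.sqrt y)]
  apply Real.sqrt_le_sqrt
  nlinarith [Real.sq_sqrt hx, Real.sq_sqrt hy, Real.sqrt_nonneg x, Real.sqrt_nonneg y]

lemma fourth_add_le (x y : ℝ) (hx : 0 ≤ x) (hy : 0 ≤ y) :
    Real.sqrt (Real.sqrt (x + y)) ≤ Real.sqrt (Real.sqrt x) + Real.sqrt (Real.sqrt y) := by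
  calc Real.sqrt (Real.sqrt (x + y)) ≤ Real.sqrt (Real.sqrt x + Real.sqrt y) :=
        Real.sqrt_le_sqrt (sqrt_add_le' x y hx hy)
    _ ≤ _ := sqrt_add_le' _ _ (Real.sqrt_nonneg x) (Real.sqrt_nonneg y)

/-- if `0 ≤ b i ≤ B` and `|a i − b i| ≤ ε` for all `i`, then the fourth roots
of the empirical variances satisfy
`((1/m) Σ (a i − 1)²)^{1/4} − ((1/m) Σ (b i − 1)²)^{1/4} ≤ √ε + (2(B+1)ε)^{1/4}`. -/
theorem empirical_variance_fourth_root_perturbation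
    (m : ℕ) (hm : 0 < m) (a b : Fin m → ℝ) (B ε : ℝ)
    (hb : ∀ i, 0 ≤ b i ∧ b i ≤ B)
    (hab : ∀ i, |a i - b i| ≤ ε) :
    Real.sqrt (Real.sqrt ((1 / m : ℝ) * ∑ i, (a i - 1) ^ 2)) -
      Real.sqrt (Real.sqrt ((1 / m : ℝ) * ∑ i, (b i - 1) ^ 2)) ≤
      Real.sqrt ε + Real.sqrt (Real.sqrt (2 * (B + 1) * ε)) := by
  have i0 : Fin m := ⟨0, hm⟩
  have hε : 0 ≤ ε := le_trans (abs_nonneg _) (hab i0)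
  have hB : 0 ≤ B := le_trans (hb i0).1 (hb i0).2
  set D : ℝ := ε ^ 2 + 2 * (B + 1) * ε with hD
  have hDnn : 0 ≤ D := by positivity
  have hmpos : (0:ℝ) < m := by exact_mod_cast hm
  -- pointwise bound
  have hpt : ∀ i, (a i - 1) ^ 2 ≤ (b i - 1) ^ 2 + D := by
    intro i
    have h1 := (abs_le.mp (hab i)).1
    have h2 := (abs_le.mp (hab i)).2
    have h3 := (hb i).1
    have h4 := (hb i).2
    nlinarith [mul_nonneg (sub_nonneg.mpr h2) h3, mul_nonneg (sub_nonneg.mpr (neg_le_sub_iff_le_add.mp h1)) h3, mul_nonneg hε h3, mul_nonneg hε (sub_nonneg.mpr h4)]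
  have hsum : ∑ i, (a i - 1) ^ 2 ≤ (∑ i, (b i - 1) ^ 2) + m * D := by
    calc ∑ i, (a i - 1) ^ 2 ≤ ∑ i, ((b i - 1) ^ 2 + D) := Finset.sum_le_sum fun i _ => hpt i
      _ = (∑ i, (b i - 1) ^ 2) + m * D := by
          rw [Finset.sum_add_distrib, Finset.sum_const, Finset.card_univ, Fintype.card_fin,
            nsmul_eq_mul]
  have hVa : (1 / m : ℝ) * ∑ i, (a i - 1) ^ 2 ≤ (1 / m : ℝ) * ∑ i, (b i - 1) ^ 2 + D := by
    have := mul_le_mul_of_nonneg_left hsum (by positivity : (0:ℝ) ≤ 1 / m)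
    calc (1 / m : ℝ) * ∑ i, (a i - 1) ^ 2
        ≤ (1 / m : ℝ) * ((∑ i, (b i - 1) ^ 2) + m * D) := this
      _ = (1 / m : ℝ) * ∑ i, (b i - 1) ^ 2 + D := by field_simp
  have hVbnn : 0 ≤ (1 / m : ℝ) * ∑ i, (b i - 1) ^ 2 := by positivity
  have key : Real.sqrt (Real.sqrt ((1 / m : ℝ) * ∑ i, (a i - 1) ^ 2)) ≤
      Real.sqrt (Real.sqrt ((1 / m : ℝ) * ∑ i, (b i - 1) ^ 2)) +
      Real.sqrt (Real.sqrt D) := by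
    calc Real.sqrt (Real.sqrt ((1 / m : ℝ) * ∑ i, (a i - 1) ^ 2))
        ≤ Real.sqrt (Real.sqrt ((1 / m : ℝ) * ∑ i, (b i - 1) ^ 2 + D)) := by
          exact Real.sqrt_le_sqrt (Real.sqrt_le_sqrt hVa)
      _ ≤ _ := fourth_add_le _ _ hVbnn hDnn
  have hDle : Real.sqrt (Real.sqrt D) ≤ Real.sqrt ε + Real.sqrt (Real.sqrt (2 * (B + 1) * ε)) := by
    calc Real.sqrt (Real.sqrt D) ≤ Real.sqrt (Real.sqrt (ε ^ 2)) +
          Real.sqrt (Real.sqrt (2 * (B + 1) * ε)) :=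
        fourth_add_le _ _ (by positivity) (by positivity)
      _ = Real.sqrt ε + Real.sqrt (Real.sqrt (2 * (B + 1) * ε)) := by
          rw [Real.sqrt_sq hε]
  linarith
end
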